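/- Let p ∈ (0,1) and ℓ ≥ 1, and let p_ℓ^{NE} be the probability, under the Bernoulli(p) product measure on {0,1}^{Λ_ℓ}, that the origin is occupied after ℓ iterations of the North-East bootstrap map with occupied boundary conditions on Λ_ℓ. If (ℓ+1)² · p_ℓ^{NE}/p ≤ 1/4, then for every L ≥ 0 and every f : {0,1}^{Λ_L} → ℝ, Var_μ(f) ≤ 8 · ∑_{x ∈ Λ_L} μ( c_x^{(ℓ)} · Var_x(f) ), where c_x^{(ℓ)} is the long-range North-East constraint on Λ_L with empty boundary conditions; in particular the constant 8 is independent of L. -/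

import Mathlib

open scoped Classical

noncomputable section

section Bernoulli

variable {V : Type*} [Fintype V] [DecidableEq V]

/-- Bernoulli(p) product weight of a configuration (`true` = occupied, with probability `p`). -/
def wt (p : ℝ) (η : V → Bool) : ℝ := ∏ x : V, if η x then p else 1 - p

/-- Expectation under the Bernoulli(p) product measure μ. -/
def mean (p : ℝ) (f : (V → Bool) → ℝ) : ℝ := ∑ η : V → Bool, wt p η * f η

/-- Probability of an event under the Bernoulli(p) product measure μ. -/
def probEv (p : ℝ) (E : (V → Bool) → Prop) : ℝ := mean p (fun η => if E η then 1 else 0)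

/-- Conditional expectation `μ_A(f)` of `f` given the coordinates outside `A`. -/
def cexp (p : ℝ) (A : Finset V) (f : (V → Bool) → ℝ) (η : V → Bool) : ℝ :=
  ∑ ζ : V → Bool,
    (∏ x : V, if x ∈ A then (if ζ x then p else 1 - p) else (if ζ x = η x then 1 else 0)) * f ζ

/-- Conditional variance `Var_A(f)` on the coordinates of `A` given the remaining coordinates. -/
def cvar (p : ℝ) (A : Finset V) (f : (V → Bool) → ℝ) (η : V → Bool) : ℝ :=
  cexp p A (fun ζ => f ζ ^ 2) η - (cexp p A f η) ^ 2

/-- Variance `Var_μ(f)` under the Bernoulli(p) product measure. -/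
def varTot (p : ℝ) (f : (V → Bool) → ℝ) : ℝ := mean p (fun η => f η ^ 2) - (mean p f) ^ 2

end Bernoulli

/-- The triangle `Λ_L = {(a,b) ∈ ℤ² : a ≥ 0, b ≥ 0, a + b ≤ L}`. -/
abbrev SiteL (L : ℕ) := {z : Fin (L + 1) × Fin (L + 1) // z.1.val + z.2.val ≤ L}

/-- `y` is the North neighbor `x + e₂` of `x`. -/
def isNorth {L : ℕ} (y x : SiteL L) : Prop :=
  y.1.1.val = x.1.1.val ∧ y.1.2.val = x.1.2.val + 1

/-- `y` is the East neighbor `x + e₁` of `x`. -/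
def isEast {L : ℕ} (y x : SiteL L) : Prop :=
  y.1.1.val = x.1.1.val + 1 ∧ y.1.2.val = x.1.2.val

/-- North-East bootstrap map with empty boundary conditions on `Λ_L`: a site becomes empty iff
it is empty or both its North and East neighbors are empty, a neighbor outside `Λ_L` counting
as empty. -/
def bootNEfree {L : ℕ} (η : SiteL L → Bool) : SiteL L → Bool := fun x =>
  if η x = false ∨
      ((∀ y, isNorth y x → η y = false) ∧ (∀ y, isEast y x → η y = false))
  then false else true

/-- North-East bootstrap map with occupied boundary conditions on `Λ_L`: a site becomes empty
iff it is empty or both its North and East neighbors are empty, a neighbor outside `Λ_L`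
counting as occupied. -/
def bootNEfull {L : ℕ} (η : SiteL L → Bool) : SiteL L → Bool := fun x =>
  if η x = false ∨
      ((∃ y, isNorth y x ∧ η y = false) ∧ (∃ y, isEast y x ∧ η y = false))
  then false else true

/-- The origin `(0,0)` of `Λ_L`. -/
def origin (L : ℕ) : SiteL L := ⟨(0, 0), by simp⟩

/-- `p_ℓ^{NE}`: the probability that the origin is occupied after `ℓ` iterations of the
North-East bootstrap map with occupied boundary conditions on `Λ_ℓ`. -/
def pNE (ℓ : ℕ) (p : ℝ) : ℝ :=
  probEv p (fun η : SiteL ℓ → Bool => bootNEfull^[ℓ] η (origin ℓ) = true)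

/-- The long-range North-East constraint `c_x^{(ℓ)}` on `Λ_L` with empty boundary conditions:
`1` iff `x` can be emptied within `ℓ` steps of the empty-boundary bootstrap map applied to the
configuration set to occupied at `x`. -/
def cNE {L : ℕ} (ℓ : ℕ) (x : SiteL L) (η : SiteL L → Bool) : ℝ :=
  if bootNEfree^[ℓ] (Function.update η x true) x = false then 1 else 0

/-!
Order the sites so that `x + Λ_ℓ \ {x}`, the set on which `c_x` depends, comes after `x`, and
decompose the variance along this order: `Var_μ(f) = ∑_x a_x` with
`a_x = μ(Var_x(μ_{>x} f))`. Split `μ_{>x} f` according to whether `c_x` holds; the part where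
it fails is recentred by its average over `x + Λ_ℓ \ {x}`, and this average leaves a factor
`1 - ε_x`, `ε_x = μ(1 - c_x)`. Conditional Cauchy–Schwarz then gives
`a_x ≤ 2 μ(c_x Var_x f) + 2 ε_x ∑_{y ∈ x + Λ_ℓ} a_y`.
Comparing the empty-boundary dynamics on `Λ_L` with the occupied-boundary dynamics on
`x + Λ_ℓ` gives `ε_x ≤ p_ℓ^{NE} / p`, and a site lies in at most `(ℓ + 1)²` translates of `Λ_ℓ`,
so summing over `x` yields `Var_μ(f) ≤ 2 ∑_x μ(c_x Var_x f) + Var_μ(f) / 2`.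
-/

open Finset Function

lemma DependsOn.apply_update {ι β : Type*} [DecidableEq ι] {α : ι → Type*}
    {f : (Π i, α i) → β} {x : ι} (hf : DependsOn f {x}ᶜ) (η : Π i, α i) (s : α x) :
    f (Function.update η x s) = f η :=
  hf fun _ hy => update_of_ne hy _ _

section

variable {p : ℝ}

def bernMass (p : ℝ) (b : Bool) : ℝ := if b then p else 1 - p

lemma bernMass_nonneg (hp₀ : 0 ≤ p) (hp₁ : p ≤ 1) (b : Bool) : 0 ≤ bernMass p b := by
  cases b <;> simp [bernMass] <;> linarith

@[simp] lemma sum_bernMass (p : ℝ) : ∑ b, bernMass p b = 1 := by simp [bernMass]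

end

section

variable {V : Type*} [DecidableEq V] {p : ℝ}

def coordKer (p : ℝ) (A : Finset V) (x : V) (s t : Bool) : ℝ :=
  if x ∈ A then bernMass p t else if t = s then 1 else 0

lemma sum_coordKer_mul_coordKer (A B : Finset V) (y : V) (s u : Bool) :
    ∑ t, coordKer p A y s t * coordKer p B y t u = coordKer p (A ∪ B) y s u := by
  by_cases hA : y ∈ A <;> by_cases hB : y ∈ B <;> cases s <;> cases u <;>
    simp [coordKer, hA, hB, bernMass] <;> ring

lemma sum_bernMass_mul_coordKer (A : Finset V) (y : V) (u : Bool) :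
    ∑ t, bernMass p t * coordKer p A y t u = bernMass p u := by
  by_cases hA : y ∈ A <;> cases u <;> simp [coordKer, hA, bernMass] <;> ring

end

section BernoulliCalculus

variable {V : Type*} [Fintype V] {p : ℝ}

lemma wt_eq_prod (η : V → Bool) : wt p η = ∏ x, bernMass p (η x) := rfl

lemma wt_nonneg (hp₀ : 0 ≤ p) (hp₁ : p ≤ 1) (η : V → Bool) : 0 ≤ wt p η :=
  prod_nonneg fun _ _ => bernMass_nonneg hp₀ hp₁ _

variable [DecidableEq V]

lemma sum_wt : ∑ η : V → Bool, wt p η = 1 := by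
  simp only [wt_eq_prod, ← Fintype.prod_sum, sum_bernMass, prod_const_one]

lemma mean_const (a : ℝ) : mean p (fun _ : V → Bool => a) = a := by
  simp [mean, ← sum_mul, sum_wt]

lemma mean_add (f g : (V → Bool) → ℝ) :
    mean p (fun η => f η + g η) = mean p f + mean p g := by
  simp [mean, mul_add, sum_add_distrib]

lemma mean_sub (f g : (V → Bool) → ℝ) :
    mean p (fun η => f η - g η) = mean p f - mean p g := by
  simp [mean, mul_sub, sum_sub_distrib]

lemma mean_const_mul (a : ℝ) (f : (V → Bool) → ℝ) :
    mean p (fun η => a * f η) = a * mean p f := by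
  simp [mean, mul_sum, mul_left_comm]

lemma mean_mono (hp₀ : 0 ≤ p) (hp₁ : p ≤ 1) {f g : (V → Bool) → ℝ} (h : ∀ η, f η ≤ g η) :
    mean p f ≤ mean p g :=
  sum_le_sum fun η _ => mul_le_mul_of_nonneg_left (h η) (wt_nonneg hp₀ hp₁ η)

lemma mean_nonneg (hp₀ : 0 ≤ p) (hp₁ : p ≤ 1) {f : (V → Bool) → ℝ} (h : ∀ η, 0 ≤ f η) :
    0 ≤ mean p f :=
  sum_nonneg fun η _ => mul_nonneg (wt_nonneg hp₀ hp₁ η) (h η)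

def condKer (p : ℝ) (A : Finset V) (η ζ : V → Bool) : ℝ := ∏ x, coordKer p A x (η x) (ζ x)

lemma cexp_eq_sum (A : Finset V) (f : (V → Bool) → ℝ) (η : V → Bool) :
    cexp p A f η = ∑ ζ, condKer p A η ζ * f ζ := rfl

lemma condKer_nonneg (hp₀ : 0 ≤ p) (hp₁ : p ≤ 1) (A : Finset V) (η ζ : V → Bool) :
    0 ≤ condKer p A η ζ := by
  refine prod_nonneg fun x _ => ?_
  unfold coordKer
  split_ifs
  exacts [bernMass_nonneg hp₀ hp₁ _, zero_le_one, le_rfl]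

lemma sum_condKer (A : Finset V) (η : V → Bool) : ∑ ζ, condKer p A η ζ = 1 := by
  simp only [condKer]
  rw [← Fintype.prod_sum]
  refine prod_eq_one fun x _ => ?_
  unfold coordKer
  split_ifs <;> simp [bernMass]

lemma condKer_eq_zero {A : Finset V} {η ζ : V → Bool} {y : V} (hy : y ∉ A) (hne : ζ y ≠ η y) :
    condKer p A η ζ = 0 :=
  prod_eq_zero (mem_univ y) (by simp [coordKer, hy, hne])

lemma sum_prod_mul_prod (a b : V → Bool → ℝ) :
    ∑ ζ : V → Bool, (∏ y, a y (ζ y)) * ∏ y, b y (ζ y) = ∏ y, ∑ t, a y t * b y t := by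
  simp only [← prod_mul_distrib, Fintype.prod_sum]

lemma cexp_congr {A : Finset V} {f g : (V → Bool) → ℝ} {η : V → Bool}
    (h : ∀ ζ, (∀ y ∉ A, ζ y = η y) → f ζ = g ζ) : cexp p A f η = cexp p A g η := by
  rw [cexp_eq_sum, cexp_eq_sum]
  refine sum_congr rfl fun ζ _ => ?_
  by_cases hζ : ∀ y ∉ A, ζ y = η y
  · rw [h ζ hζ]
  · push Not at hζ
    obtain ⟨y, hy, hne⟩ := hζ
    simp [condKer_eq_zero hy hne]

lemma cexp_dependsOn (A : Finset V) (f : (V → Bool) → ℝ) : DependsOn (cexp p A f) (↑A)ᶜ :=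
  fun η η' h => sum_congr rfl fun ζ _ => congrArg (· * f ζ) (prod_congr rfl fun y _ => by
    by_cases hy : y ∈ A
    · simp [hy]
    · simp [hy, h y (by simpa using hy)])

lemma cexp_add (A : Finset V) (f g : (V → Bool) → ℝ) (η : V → Bool) :
    cexp p A (fun ζ => f ζ + g ζ) η = cexp p A f η + cexp p A g η := by
  simp [cexp_eq_sum, mul_add, sum_add_distrib]

lemma cexp_sub (A : Finset V) (f g : (V → Bool) → ℝ) (η : V → Bool) :
    cexp p A (fun ζ => f ζ - g ζ) η = cexp p A f η - cexp p A g η := by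
  simp [cexp_eq_sum, mul_sub, sum_sub_distrib]

lemma cexp_const_mul (A : Finset V) (a : ℝ) (f : (V → Bool) → ℝ) (η : V → Bool) :
    cexp p A (fun ζ => a * f ζ) η = a * cexp p A f η := by
  simp [cexp_eq_sum, mul_sum, mul_left_comm]

lemma cexp_const (A : Finset V) (a : ℝ) (η : V → Bool) : cexp p A (fun _ => a) η = a := by
  rw [cexp_eq_sum, ← sum_mul, sum_condKer, one_mul]

lemma cexp_mono (hp₀ : 0 ≤ p) (hp₁ : p ≤ 1) (A : Finset V) {f g : (V → Bool) → ℝ}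
    (h : ∀ ζ, f ζ ≤ g ζ) (η : V → Bool) : cexp p A f η ≤ cexp p A g η :=
  sum_le_sum fun ζ _ => mul_le_mul_of_nonneg_left (h ζ) (condKer_nonneg hp₀ hp₁ A η ζ)

lemma cexp_nonneg (hp₀ : 0 ≤ p) (hp₁ : p ≤ 1) (A : Finset V) {f : (V → Bool) → ℝ}
    (h : ∀ ζ, 0 ≤ f ζ) (η : V → Bool) : 0 ≤ cexp p A f η :=
  sum_nonneg fun ζ _ => mul_nonneg (condKer_nonneg hp₀ hp₁ A η ζ) (h ζ)

lemma cexp_mul_of_dependsOn {A : Finset V} (u : (V → Bool) → ℝ) {v : (V → Bool) → ℝ}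
    (hv : DependsOn v (↑A)ᶜ) (η : V → Bool) :
    cexp p A (fun ζ => u ζ * v ζ) η = v η * cexp p A u η := by
  rw [← cexp_const_mul]
  exact cexp_congr fun ζ hζ => by rw [hv fun y hy => hζ y hy, mul_comm]

lemma cexp_of_dependsOn {A : Finset V} {f : (V → Bool) → ℝ} (hf : DependsOn f (↑A)ᶜ)
    (η : V → Bool) : cexp p A f η = f η := by
  simpa [cexp_const] using cexp_mul_of_dependsOn (p := p) (fun _ => 1) hf η

lemma cexp_empty (f : (V → Bool) → ℝ) (η : V → Bool) : cexp p ∅ f η = f η :=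
  cexp_of_dependsOn (by simpa using dependsOn_univ f) η

lemma cexp_univ (f : (V → Bool) → ℝ) (η : V → Bool) : cexp p univ f η = mean p f := by
  simp [cexp_eq_sum, mean, condKer, coordKer, wt_eq_prod]

lemma cexp_cexp (A B : Finset V) (f : (V → Bool) → ℝ) (η : V → Bool) :
    cexp p A (cexp p B f) η = cexp p (A ∪ B) f η := by
  simp only [cexp_eq_sum, mul_sum, ← mul_assoc]
  rw [sum_comm]
  refine sum_congr rfl fun ξ _ => ?_
  rw [← sum_mul]
  simp only [condKer]
  rw [sum_prod_mul_prod (fun y t => coordKer p A y (η y) t) (fun y t => coordKer p B y t (ξ y))]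
  simp only [sum_coordKer_mul_coordKer]

lemma mean_cexp (A : Finset V) (f : (V → Bool) → ℝ) : mean p (cexp p A f) = mean p f := by
  simp only [mean, cexp_eq_sum, mul_sum, ← mul_assoc]
  rw [sum_comm]
  refine sum_congr rfl fun ζ _ => ?_
  rw [← sum_mul]
  simp only [wt_eq_prod, condKer]
  rw [sum_prod_mul_prod (fun _ t => bernMass p t) (fun y t => coordKer p A y t (ζ y))]
  simp only [sum_bernMass_mul_coordKer]

lemma condKer_singleton_update (x : V) (η : V → Bool) (b : Bool) :
    condKer p {x} η (update η x b) = bernMass p b := by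
  rw [condKer, Fintype.prod_eq_single x fun y hy => by simp [coordKer, hy]]
  simp [coordKer]

lemma cexp_singleton (x : V) (f : (V → Bool) → ℝ) (η : V → Bool) :
    cexp p {x} f η = p * f (update η x true) + (1 - p) * f (update η x false) := by
  have hne : update η x true ≠ update η x false := fun h => by simpa using congrFun h x
  rw [cexp_eq_sum, Fintype.sum_eq_add _ _ hne, condKer_singleton_update,
    condKer_singleton_update]
  · rfl
  rintro ζ ⟨h₁, h₀⟩
  obtain ⟨y, hyx, hy⟩ : ∃ y ≠ x, ζ y ≠ η y := by
    by_contra! h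
    have hζ : ζ = update η x (ζ x) := by
      ext y
      by_cases hyx : y = x
      · subst hyx; simp
      · simp [hyx, h y hyx]
    cases hx : ζ x
    · exact h₀ (hx ▸ hζ)
    · exact h₁ (hx ▸ hζ)
  rw [condKer_eq_zero (by simpa using hyx) hy, zero_mul]

lemma cvar_singleton (x : V) (f : (V → Bool) → ℝ) (η : V → Bool) :
    cvar p {x} f η = p * (1 - p) * (f (update η x true) - f (update η x false)) ^ 2 := by
  rw [cvar, cexp_singleton, cexp_singleton]
  ring

lemma cvar_singleton_nonneg (hp₀ : 0 ≤ p) (hp₁ : p ≤ 1) (x : V) (f : (V → Bool) → ℝ)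
    (η : V → Bool) : 0 ≤ cvar p {x} f η := by
  rw [cvar_singleton]
  have : 0 ≤ 1 - p := by linarith
  positivity

lemma mean_ite_eq_mul_mean {x : V} {g : (V → Bool) → ℝ} (hg : DependsOn g {x}ᶜ) :
    mean p (fun η => if η x = true then g η else 0) = p * mean p g := by
  rw [← mean_cexp {x}, ← mean_const_mul]
  congr 1
  funext η
  simp [cexp_singleton, hg.apply_update]

lemma cexp_update {A : Finset V} {x : V} (hx : x ∉ A) (f : (V → Bool) → ℝ) (η : V → Bool)
    (s : Bool) : cexp p A f (update η x s) = cexp p A (fun ζ => f (update ζ x s)) η := by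
  set F : (V → Bool) → ℝ := fun ζ => f (update ζ x s)
  have hF : cexp p {x} F = F := funext <| cexp_of_dependsOn fun ζ ξ h => by
    simp only [F]
    congr 1
    ext y
    by_cases hyx : y = x
    · simp [hyx]
    · simp [hyx, h y (by simpa using hyx)]
  calc cexp p A f (update η x s) = cexp p A F (update η x s) :=
        cexp_congr fun ζ hζ => by
          simp only [F]
          rw [← (by simpa using hζ x hx : ζ x = s), update_eq_self]
    _ = cexp p (A ∪ {x}) F (update η x s) := by rw [← cexp_cexp, hF]
    _ = cexp p (A ∪ {x}) F η := cexp_dependsOn _ F fun y hy => by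
        simp only [coe_union, coe_singleton, Set.mem_compl_iff, Set.mem_union, not_or] at hy
        exact update_of_ne (by simpa using hy.2) _ _
    _ = cexp p A F η := by rw [← cexp_cexp, hF]

lemma sq_cexp_mul_le (hp₀ : 0 ≤ p) (hp₁ : p ≤ 1) (A : Finset V) {u : (V → Bool) → ℝ}
    (hu : ∀ ζ, 0 ≤ u ζ) (h : (V → Bool) → ℝ) (η : V → Bool) :
    cexp p A (fun ζ => u ζ * h ζ) η ^ 2
      ≤ cexp p A u η * cexp p A (fun ζ => u ζ * h ζ ^ 2) η := by
  have hk := condKer_nonneg hp₀ hp₁ A η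
  refine sum_sq_le_sum_mul_sum_of_sq_le_mul _ (fun ζ _ => mul_nonneg (hk ζ) (hu ζ))
    (fun ζ _ => mul_nonneg (hk ζ) (mul_nonneg (hu ζ) (sq_nonneg _))) fun ζ _ => le_of_eq ?_
  ring

lemma cvar_cexp_mul_le (hp₀ : 0 ≤ p) (hp₁ : p ≤ 1) {A : Finset V} {x : V} (hx : x ∉ A)
    {u : (V → Bool) → ℝ} (hu : ∀ ζ, 0 ≤ u ζ) (hux : DependsOn u {x}ᶜ)
    (h : (V → Bool) → ℝ) (η : V → Bool) :
    cvar p {x} (cexp p A fun ζ => u ζ * h ζ) η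
      ≤ cexp p A u η * cexp p A (fun ζ => u ζ * cvar p {x} h ζ) η := by
  set D : (V → Bool) → ℝ := fun ζ => h (update ζ x true) - h (update ζ x false)
  have hD : cexp p A (fun ζ => u ζ * h ζ) (update η x true)
      - cexp p A (fun ζ => u ζ * h ζ) (update η x false) = cexp p A (fun ζ => u ζ * D ζ) η := by
    rw [cexp_update hx, cexp_update hx, ← cexp_sub]
    simp only [hux.apply_update, D, mul_sub]
  have hpq : 0 ≤ p * (1 - p) := mul_nonneg hp₀ (by linarith)
  calc cvar p {x} (cexp p A fun ζ => u ζ * h ζ) η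
      = p * (1 - p) * cexp p A (fun ζ => u ζ * D ζ) η ^ 2 := by rw [cvar_singleton, hD]
    _ ≤ p * (1 - p) * (cexp p A u η * cexp p A (fun ζ => u ζ * D ζ ^ 2) η) :=
        mul_le_mul_of_nonneg_left (sq_cexp_mul_le hp₀ hp₁ A hu D η) hpq
    _ = cexp p A u η * cexp p A (fun ζ => u ζ * cvar p {x} h ζ) η := by
        rw [mul_left_comm, ← cexp_const_mul]
        congr 2
        funext ζ
        rw [cvar_singleton]
        ring

lemma mean_cvar_cexp_mul_le (hp₀ : 0 ≤ p) (hp₁ : p ≤ 1) {A : Finset V} {x : V} (hx : x ∉ A)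
    {u : (V → Bool) → ℝ} (hu : ∀ ζ, 0 ≤ u ζ) (hux : DependsOn u {x}ᶜ) {ε : ℝ}
    (hε : ∀ η, cexp p A u η ≤ ε) (h : (V → Bool) → ℝ) :
    mean p (cvar p {x} (cexp p A fun ζ => u ζ * h ζ))
      ≤ ε * mean p (fun η => u η * cvar p {x} h η) := by
  have hv : ∀ η, 0 ≤ cexp p A (fun ζ => u ζ * cvar p {x} h ζ) η :=
    cexp_nonneg hp₀ hp₁ A fun ζ => mul_nonneg (hu ζ) (cvar_singleton_nonneg hp₀ hp₁ x h ζ)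
  calc mean p (cvar p {x} (cexp p A fun ζ => u ζ * h ζ))
      ≤ mean p (fun η => ε * cexp p A (fun ζ => u ζ * cvar p {x} h ζ) η) :=
        mean_mono hp₀ hp₁ fun η => (cvar_cexp_mul_le hp₀ hp₁ hx hu hux h η).trans
          (mul_le_mul_of_nonneg_right (hε η) (hv η))
    _ = ε * mean p (fun η => u η * cvar p {x} h η) := by rw [mean_const_mul, mean_cexp]

lemma mean_cvar_cexp_le (hp₀ : 0 ≤ p) (hp₁ : p ≤ 1) {A : Finset V} {x : V} (hx : x ∉ A)
    (h : (V → Bool) → ℝ) : mean p (cvar p {x} (cexp p A h)) ≤ mean p (cvar p {x} h) := by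
  simpa [cexp_const] using mean_cvar_cexp_mul_le hp₀ hp₁ hx (u := fun _ => 1)
    (fun _ => zero_le_one) (fun _ _ _ => rfl) (ε := 1) (fun η => (cexp_const A 1 η).le) h

lemma mean_cvar (A : Finset V) (h : (V → Bool) → ℝ) :
    mean p (cvar p A h) = mean p (fun η => h η ^ 2) - mean p (fun η => cexp p A h η ^ 2) := by
  unfold cvar
  rw [mean_sub, mean_cexp]

lemma mean_cvar_le_mean_sq (hp₀ : 0 ≤ p) (hp₁ : p ≤ 1) (A : Finset V) (h : (V → Bool) → ℝ) :
    mean p (cvar p A h) ≤ mean p (fun η => h η ^ 2) := by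
  rw [mean_cvar]
  linarith [mean_nonneg hp₀ hp₁ fun η => sq_nonneg (cexp p A h η)]

lemma mean_sq_sub_cexp (A : Finset V) (g : (V → Bool) → ℝ) :
    mean p (fun η => (g η - cexp p A g η) ^ 2)
      = mean p (fun η => g η ^ 2) - mean p (fun η => cexp p A g η ^ 2) := by
  have hcross : mean p (fun η => g η * cexp p A g η) = mean p (fun η => cexp p A g η ^ 2) := by
    rw [← mean_cexp A]
    congr 1
    funext η
    rw [cexp_mul_of_dependsOn g (cexp_dependsOn A g), sq]
  have e : (fun η => (g η - cexp p A g η) ^ 2) = fun η => (g η ^ 2 - cexp p A g η ^ 2)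
      + 2 * (cexp p A g η ^ 2 - g η * cexp p A g η) := by
    funext η; ring
  rw [e, mean_add, mean_sub, mean_const_mul, mean_sub, hcross, sub_self, mul_zero, add_zero]

lemma cexp_eq_mean {A : Finset V} {f : (V → Bool) → ℝ} (hf : DependsOn f A) (η : V → Bool) :
    cexp p A f η = mean p f := by
  have h : cexp p Aᶜ f = f := funext <| cexp_of_dependsOn (by simpa using hf)
  rw [← h, cexp_cexp, union_compl, cexp_univ, h]

lemma cvar_const_mul (A : Finset V) (a : ℝ) (F : (V → Bool) → ℝ) (η : V → Bool) :
    cvar p A (fun ζ => a * F ζ) η = a ^ 2 * cvar p A F η := by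
  simp only [cvar, mul_pow, cexp_const_mul]
  ring

lemma cvar_singleton_add_le (hp₀ : 0 ≤ p) (hp₁ : p ≤ 1) (x : V) (G R : (V → Bool) → ℝ)
    (η : V → Bool) :
    cvar p {x} (fun ζ => G ζ + R ζ) η ≤ 2 * cvar p {x} G η + 2 * cvar p {x} R η := by
  simp only [cvar_singleton]
  have hpq : 0 ≤ p * (1 - p) := mul_nonneg hp₀ (by linarith)
  nlinarith [sq_nonneg (G (update η x true) - G (update η x false)
    - (R (update η x true) - R (update η x false)))]

end BernoulliCalculus

section Oriented

variable {V : Type*} [Fintype V] [DecidableEq V] [LinearOrder V] {p : ℝ}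

def future (x : V) : Finset V := univ.filter (x < ·)

def stepVar (p : ℝ) (f : (V → Bool) → ℝ) (x : V) : ℝ := mean p (cvar p {x} (cexp p (future x) f))

lemma mean_sq_sub_mean_sq_cexp_eq_sum (E : Finset V) (g : (V → Bool) → ℝ) :
    mean p (fun η => g η ^ 2) - mean p (fun η => cexp p E g η ^ 2)
      = ∑ y ∈ E, mean p (cvar p {y} (cexp p (E.filter (y < ·)) g)) := by
  induction E using Finset.induction_on_min with
  | empty => simp [cexp_empty]
  | insert a s ha ih =>
    have has : a ∉ s := fun h => lt_irrefl a (ha a h)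
    have hfa : (insert a s).filter (a < ·) = s := by
      rw [filter_insert, if_neg (lt_irrefl a), filter_true_of_mem ha]
    have hfy : ∀ y ∈ s, (insert a s).filter (y < ·) = s.filter (y < ·) := fun y hy => by
      rw [filter_insert, if_neg (not_lt.2 (ha y hy).le)]
    have hcomp : ∀ η, cexp p (insert a s) g η = cexp p {a} (cexp p s g) η := fun η => by
      rw [cexp_cexp, insert_eq]
    rw [sum_insert has, hfa, sum_congr rfl fun y hy => by rw [hfy y hy], ← ih, mean_cvar]
    simp only [hcomp]
    ring

lemma varTot_eq_sum_stepVar (f : (V → Bool) → ℝ) : varTot p f = ∑ x, stepVar p f x := by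
  have h := mean_sq_sub_mean_sq_cexp_eq_sum (p := p) univ f
  simp only [cexp_univ, mean_const] at h
  exact h

lemma stepVar_nonneg (hp₀ : 0 ≤ p) (hp₁ : p ≤ 1) (f : (V → Bool) → ℝ) (x : V) :
    0 ≤ stepVar p f x :=
  mean_nonneg hp₀ hp₁ fun η => cvar_singleton_nonneg hp₀ hp₁ x _ η

lemma mean_cvar_cexp_le_stepVar (hp₀ : 0 ≤ p) (hp₁ : p ≤ 1) {S : Finset V} {y : V}
    (hS : future y ⊆ S) (hy : y ∉ S) (f : (V → Bool) → ℝ) :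
    mean p (cvar p {y} (cexp p S f)) ≤ stepVar p f y := by
  have h : cexp p S f = cexp p (S \ future y) (cexp p (future y) f) :=
    funext fun η => by rw [cexp_cexp, sdiff_union_of_subset hS]
  rw [h]
  exact mean_cvar_cexp_le hp₀ hp₁ (fun h => hy (mem_sdiff.1 h).1) _

section PerSite

variable {x : V} {D : Finset V} {c : (V → Bool) → ℝ}

lemma mean_sq_sub_cexp_le_sum_stepVar (hp₀ : 0 ≤ p) (hp₁ : p ≤ 1) (hD : ∀ y ∈ D, x < y)
    (f : (V → Bool) → ℝ) :
    mean p (fun η => (cexp p (future x \ D) f η - cexp p D (cexp p (future x \ D) f) η) ^ 2)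
      ≤ ∑ y ∈ D, stepVar p f y := by
  rw [mean_sq_sub_cexp, mean_sq_sub_mean_sq_cexp_eq_sum]
  refine sum_le_sum fun y hy => ?_
  rw [show cexp p (D.filter (y < ·)) (cexp p (future x \ D) f)
      = cexp p (D.filter (y < ·) ∪ (future x \ D)) f from funext (cexp_cexp _ _ f)]
  refine mean_cvar_cexp_le_stepVar hp₀ hp₁ (fun z hz => ?_) ?_ f
  · have hyz : y < z := (mem_filter.1 hz).2
    by_cases hzD : z ∈ D
    · exact mem_union_left _ (mem_filter.2 ⟨hzD, hyz⟩)
    · exact mem_union_right _ (mem_sdiff.2 ⟨mem_filter.2 ⟨mem_univ z, (hD y hy).trans hyz⟩, hzD⟩)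
  · simp [hy]

lemma one_sub_mul_cexp_future_eq (hD : D ⊆ future x)
    (hcD : DependsOn c D) (f : (V → Bool) → ℝ) (η : V → Bool) :
    (1 - mean p (fun ζ => 1 - c ζ)) * cexp p (future x) f η
      = cexp p (future x) (fun ζ => c ζ * f ζ) η
        + cexp p D (fun ζ => (1 - c ζ) * (cexp p (future x \ D) f ζ
            - cexp p D (cexp p (future x \ D) f) ζ)) η := by
  set g := cexp p (future x \ D) f
  set F := cexp p (future x) f
  have hgF : cexp p D g = F := funext fun ζ => by rw [cexp_cexp, union_sdiff_of_subset hD]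
  have h₁ : F η = cexp p (future x) (fun ζ => c ζ * f ζ) η
      + cexp p (future x) (fun ζ => (1 - c ζ) * f ζ) η := by
    rw [← cexp_add]
    simp only [F, sub_mul, one_mul, add_sub_cancel]
  have h₂ : cexp p (future x) (fun ζ => (1 - c ζ) * f ζ) η
      = cexp p D (fun ζ => (1 - c ζ) * g ζ) η := by
    rw [← union_sdiff_of_subset hD, ← cexp_cexp]
    congr 1
    funext ζ
    have hdep : DependsOn (fun ξ => 1 - c ξ) (↑(future x \ D))ᶜ := fun ξ ξ' h =>
      congrArg (1 - ·) (hcD fun y hy => h y fun hy' => (mem_sdiff.1 hy').2 hy)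
    simpa only [mul_comm (f _)] using cexp_mul_of_dependsOn (p := p) f hdep ζ
  have h₃ : cexp p D (fun ζ => (1 - c ζ) * F ζ) η = F η * mean p (fun ζ => 1 - c ζ) := by
    rw [cexp_mul_of_dependsOn _ ((cexp_dependsOn _ f).mono (Set.compl_subset_compl.2 hD)),
      cexp_eq_mean (f := fun ζ => 1 - c ζ) fun ξ ξ' h => congrArg (1 - ·) (hcD h)]
  have h₄ : cexp p D (fun ζ => (1 - c ζ) * (g ζ - F ζ)) η
      = cexp p D (fun ζ => (1 - c ζ) * g ζ) η - cexp p D (fun ζ => (1 - c ζ) * F ζ) η := by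
    rw [← cexp_sub]
    simp only [mul_sub]
  rw [hgF]
  linear_combination h₁ + h₂ - h₄ + h₃

lemma mean_cvar_cexp_one_sub_mul_le (hp₀ : 0 ≤ p) (hp₁ : p ≤ 1) (hc₀ : ∀ η, 0 ≤ c η)
    (hc₁ : ∀ η, c η ≤ 1) (hcD : DependsOn c D) (hD : ∀ y ∈ D, x < y) (f : (V → Bool) → ℝ) :
    mean p (cvar p {x} (cexp p D fun ζ => (1 - c ζ) * (cexp p (future x \ D) f ζ
        - cexp p D (cexp p (future x \ D) f) ζ)))
      ≤ mean p (fun η => 1 - c η) * ∑ y ∈ D, stepVar p f y := by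
  set h : (V → Bool) → ℝ := fun ζ => cexp p (future x \ D) f ζ
    - cexp p D (cexp p (future x \ D) f) ζ
  have hxD : x ∉ D := fun hx => lt_irrefl x (hD x hx)
  have hc : DependsOn (fun η => 1 - c η) D := fun η η' hη => congrArg (1 - ·) (hcD hη)
  have hε : 0 ≤ mean p (fun η => 1 - c η) := mean_nonneg hp₀ hp₁ fun η => sub_nonneg.2 (hc₁ η)
  calc _ ≤ mean p (fun η => 1 - c η) * mean p (fun η => (1 - c η) * cvar p {x} h η) :=
        mean_cvar_cexp_mul_le hp₀ hp₁ hxD (fun ζ => sub_nonneg.2 (hc₁ ζ))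
          (hc.mono fun y hy => ne_of_mem_of_not_mem hy hxD) (fun η => (cexp_eq_mean hc η).le) h
    _ ≤ mean p (fun η => 1 - c η) * mean p (fun η => h η ^ 2) := by
        refine mul_le_mul_of_nonneg_left ((mean_mono hp₀ hp₁ fun η => ?_).trans
          (mean_cvar_le_mean_sq hp₀ hp₁ {x} h)) hε
        exact mul_le_of_le_one_left (cvar_singleton_nonneg hp₀ hp₁ x h η) (by linarith [hc₀ η])
    _ ≤ mean p (fun η => 1 - c η) * ∑ y ∈ D, stepVar p f y :=
        mul_le_mul_of_nonneg_left (mean_sq_sub_cexp_le_sum_stepVar hp₀ hp₁ hD f) hε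

lemma one_sub_sq_mul_stepVar_le (hp₀ : 0 ≤ p) (hp₁ : p ≤ 1) (hc₀ : ∀ η, 0 ≤ c η)
    (hc₁ : ∀ η, c η ≤ 1) (hcD : DependsOn c D) (hD : ∀ y ∈ D, x < y) (f : (V → Bool) → ℝ) :
    (1 - mean p (fun η => 1 - c η)) ^ 2 * stepVar p f x
      ≤ 2 * mean p (fun η => c η * cvar p {x} f η)
        + 2 * mean p (fun η => 1 - c η) * ∑ y ∈ D, stepVar p f y := by
  set ε := mean p (fun η => 1 - c η)
  have hDx : D ⊆ future x := fun y hy => mem_filter.2 ⟨mem_univ y, hD y hy⟩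
  have hxx : x ∉ future x := by simp [future]
  have hsplit : (1 - ε) ^ 2 * stepVar p f x
      ≤ 2 * mean p (cvar p {x} (cexp p (future x) fun ζ => c ζ * f ζ))
        + 2 * mean p (cvar p {x} (cexp p D fun ζ => (1 - c ζ) * (cexp p (future x \ D) f ζ
            - cexp p D (cexp p (future x \ D) f) ζ))) := by
    rw [stepVar, ← mean_const_mul, ← mean_const_mul, ← mean_const_mul, ← mean_add]
    refine mean_mono hp₀ hp₁ fun η => ?_
    rw [← cvar_const_mul, show (fun ζ => (1 - ε) * cexp p (future x) f ζ) = _ from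
      funext (one_sub_mul_cexp_future_eq hDx hcD f)]
    exact cvar_singleton_add_le hp₀ hp₁ x _ _ η
  have hgood : mean p (cvar p {x} (cexp p (future x) fun ζ => c ζ * f ζ))
      ≤ mean p (fun η => c η * cvar p {x} f η) := by
    simpa using mean_cvar_cexp_mul_le hp₀ hp₁ hxx hc₀
      (hcD.mono fun y hy => ne_of_mem_of_not_mem hy fun hx => lt_irrefl x (hD x hx)) (ε := 1)
      (fun η => (cexp_mono hp₀ hp₁ _ hc₁ η).trans_eq (cexp_const _ 1 η)) f
  have hbad := mean_cvar_cexp_one_sub_mul_le hp₀ hp₁ hc₀ hc₁ hcD hD f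
  linarith

end PerSite

theorem one_sub_two_mul_varTot_le (hp₀ : 0 ≤ p) (hp₁ : p ≤ 1) (c : V → (V → Bool) → ℝ)
    (D : V → Finset V) (hc₀ : ∀ x η, 0 ≤ c x η) (hc₁ : ∀ x η, c x η ≤ 1)
    (hcD : ∀ x, DependsOn (c x) (D x))
    (hD : ∀ x, ∀ y ∈ D x, x < y) {δ : ℝ}
    (hδ : ∀ y, ∑ x ∈ univ.filter (fun x => y ∈ insert x (D x)), mean p (fun η => 1 - c x η) ≤ δ)
    (f : (V → Bool) → ℝ) :
    (1 - 2 * δ) * varTot p f ≤ 2 * ∑ x, mean p (fun η => c x η * cvar p {x} f η) := by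
  set a := stepVar p f
  set ε : V → ℝ := fun x => mean p (fun η => 1 - c x η)
  have ha := stepVar_nonneg hp₀ hp₁ f
  have hlocal : ∀ x, a x ≤ 2 * mean p (fun η => c x η * cvar p {x} f η)
      + 2 * (ε x * ∑ y ∈ insert x (D x), a y) := by
    intro x
    have h := one_sub_sq_mul_stepVar_le hp₀ hp₁ (hc₀ x) (hc₁ x) (hcD x) (hD x) f
    have hεx : 0 ≤ ε x := mean_nonneg hp₀ hp₁ fun η => sub_nonneg.2 (hc₁ x η)
    rw [sum_insert fun hx => lt_irrefl x (hD x x hx)]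
    -- `(1 - ε) ^ 2 ≥ 1 - 2 ε`
    nlinarith [mul_nonneg (sq_nonneg (ε x)) (ha x)]
  have hswap : ∑ x, ε x * ∑ y ∈ insert x (D x), a y
      = ∑ y, a y * ∑ x ∈ univ.filter (fun x => y ∈ insert x (D x)), ε x := by
    simp only [mul_sum]
    exact (sum_comm' fun x y => by simp).trans (sum_congr rfl fun y _ =>
      sum_congr rfl fun x _ => mul_comm _ _)
  have hδa : ∑ y, a y * ∑ x ∈ univ.filter (fun x => y ∈ insert x (D x)), ε x
      ≤ δ * ∑ y, a y := by
    rw [mul_sum]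
    exact sum_le_sum fun y _ => by rw [mul_comm δ]; exact mul_le_mul_of_nonneg_left (hδ y) (ha y)
  have hsum := sum_le_sum fun x (_ : x ∈ univ) => hlocal x
  rw [sum_add_distrib, ← mul_sum, ← mul_sum, hswap] at hsum
  rw [varTot_eq_sum_stepVar]
  linarith

end Oriented

section Transport

variable {V W : Type*} [Fintype V] [Fintype W] {p : ℝ}

lemma wt_comp_equiv (e : V ≃ W) (η : W → Bool) : wt p (η ∘ e) = wt p η :=
  e.prod_comp fun w => bernMass p (η w)

lemma wt_sumElim (η : V → Bool) (ζ : W → Bool) : wt p (Sum.elim η ζ) = wt p η * wt p ζ :=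
  Fintype.prod_sum_type _

variable [DecidableEq V] [DecidableEq W]

lemma mean_comp_equiv (e : V ≃ W) (F : (V → Bool) → ℝ) :
    mean p (fun η : W → Bool => F (η ∘ e)) = mean p F :=
  Fintype.sum_equiv (e.arrowCongr (Equiv.refl Bool)).symm _ _ fun η => by
    rw [← wt_comp_equiv e η]
    rfl

lemma mean_comp_inl (F : (V → Bool) → ℝ) :
    mean p (fun κ : V ⊕ W → Bool => F (κ ∘ Sum.inl)) = mean p F := by
  unfold mean
  rw [← (Equiv.sumArrowEquivProdArrow V W Bool).symm.sum_comp, Fintype.sum_prod_type]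
  refine sum_congr rfl fun η _ => ?_
  simp only [Equiv.sumArrowEquivProdArrow, Equiv.coe_fn_symm_mk, wt_sumElim, Sum.elim_comp_inl,
    mul_right_comm (wt p η), ← mul_sum, sum_wt, mul_one]

lemma mean_comp_injective {U : Type*} [Fintype U] [DecidableEq U] {j : U → W} (hj : Injective j)
    (F : (U → Bool) → ℝ) : mean p (fun η : W → Bool => F (η ∘ j)) = mean p F := by
  let e : U ⊕ {w // w ∉ Set.range j} ≃ W :=
    (Equiv.sumCongr (Equiv.ofInjective j hj) (Equiv.refl _)).trans (Equiv.sumCompl _)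
  calc mean p (fun η : W → Bool => F (η ∘ j))
      = mean p (fun η : W → Bool => (fun κ => F (κ ∘ Sum.inl)) (η ∘ e)) := rfl
    _ = mean p F := (mean_comp_equiv e _).trans (mean_comp_inl F)

end Transport

section Lattice

variable {L ℓ : ℕ}

lemma siteL_ext {x y : SiteL L} (h₁ : x.1.1.val = y.1.1.val) (h₂ : x.1.2.val = y.1.2.val) :
    x = y :=
  Subtype.ext (Prod.ext (Fin.ext h₁) (Fin.ext h₂))

/-- `y ∈ x + Λ_k`. -/
def InTriangle (k : ℕ) (x y : SiteL L) : Prop :=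
  x.1.1.val ≤ y.1.1.val ∧ x.1.2.val ≤ y.1.2.val ∧
    y.1.1.val + y.1.2.val ≤ x.1.1.val + x.1.2.val + k

lemma inTriangle_self (k : ℕ) (x : SiteL L) : InTriangle k x x := by
  unfold InTriangle; omega

lemma bootNEfree_eq_false_iff (ξ : SiteL L → Bool) (z : SiteL L) :
    bootNEfree ξ z = false ↔ ξ z = false ∨
      (∀ y, isNorth y z → ξ y = false) ∧ (∀ y, isEast y z → ξ y = false) := by
  unfold bootNEfree
  split_ifs with h <;> simpa using h

lemma bootNEfull_eq_false_iff (ξ : SiteL L → Bool) (z : SiteL L) :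
    bootNEfull ξ z = false ↔ ξ z = false ∨
      (∃ y, isNorth y z ∧ ξ y = false) ∧ (∃ y, isEast y z ∧ ξ y = false) := by
  unfold bootNEfull
  split_ifs with h <;> simpa using h

lemma bootNEfree_congr {ξ ξ' : SiteL L → Bool} {w : SiteL L}
    (h : ∀ y, y = w ∨ isNorth y w ∨ isEast y w → ξ y = ξ' y) :
    bootNEfree ξ w = bootNEfree ξ' w := by
  have hN : (∀ y, isNorth y w → ξ y = false) ↔ ∀ y, isNorth y w → ξ' y = false :=
    forall_congr' fun y => imp_congr_right fun hy => by rw [h y (.inr (.inl hy))]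
  have hE : (∀ y, isEast y w → ξ y = false) ↔ ∀ y, isEast y w → ξ' y = false :=
    forall_congr' fun y => imp_congr_right fun hy => by rw [h y (.inr (.inr hy))]
  simp only [bootNEfree, h w (.inl rfl), hN, hE]

lemma iterate_bootNEfree_congr (k : ℕ) {η η' : SiteL L → Bool} {w : SiteL L}
    (h : ∀ y, InTriangle k w y → η y = η' y) : bootNEfree^[k] η w = bootNEfree^[k] η' w := by
  induction k generalizing w with
  | zero => exact h w (inTriangle_self 0 w)
  | succ k ih =>
    rw [iterate_succ_apply', iterate_succ_apply']
    refine bootNEfree_congr fun y hy => ih fun z hz => h z ?_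
    unfold InTriangle isNorth isEast at *
    rcases hy with rfl | hy | hy <;> omega

lemma monotone_bootNEfull : Monotone (bootNEfull (L := L)) := by
  intro ζ ζ' h z
  have hle : ∀ y, ζ' y = false → ζ y = false := fun y hy => le_bot_iff.mp ((h y).trans_eq hy)
  by_cases hz : bootNEfull ζ' z = false
  · rw [hz, (bootNEfull_eq_false_iff ζ z).2]
    rcases (bootNEfull_eq_false_iff ζ' z).1 hz with h₀ | ⟨⟨yN, hN, hyN⟩, ⟨yE, hE, hyE⟩⟩
    exacts [.inl (hle z h₀), .inr ⟨⟨yN, hN, hle yN hyN⟩, ⟨yE, hE, hle yE hyE⟩⟩]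
  · rw [Bool.eq_true_of_not_eq_false hz]
    exact Bool.le_true _

/-- `x + z ∈ Λ_L`. -/
def FitsAt (x : SiteL L) (z : SiteL ℓ) : Prop :=
  x.1.1.val + z.1.1.val + (x.1.2.val + z.1.2.val) ≤ L

def shiftSite (x : SiteL L) (z : SiteL ℓ) (h : FitsAt x z) : SiteL L :=
  ⟨(⟨x.1.1.val + z.1.1.val, by unfold FitsAt at h; omega⟩,
    ⟨x.1.2.val + z.1.2.val, by unfold FitsAt at h; omega⟩), h⟩

lemma exists_eq_shiftSite {x y : SiteL L} {z : SiteL ℓ} (h₁ : y.1.1.val = x.1.1.val + z.1.1.val)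
    (h₂ : y.1.2.val = x.1.2.val + z.1.2.val) : ∃ h, y = shiftSite x z h :=
  ⟨by unfold FitsAt; have := y.2; omega, siteL_ext h₁ h₂⟩

lemma shiftSite_origin (x : SiteL L) (h : FitsAt x (origin ℓ)) : shiftSite x (origin ℓ) h = x :=
  siteL_ext rfl rfl

lemma fitsAt_origin (x : SiteL L) : FitsAt x (origin ℓ) := x.2

/-- The configuration `η` on `x + Λ_ℓ`, read as a configuration on `Λ_ℓ`; the sites of
`x + Λ_ℓ` outside `Λ_L` are empty. -/
def localView (ℓ : ℕ) (x : SiteL L) (η : SiteL L → Bool) : SiteL ℓ → Bool :=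
  fun z => if h : FitsAt x z then η (shiftSite x z h) else false

/-- Occupied boundary conditions on `x + Λ_ℓ` make emptying harder than empty boundary
conditions on `Λ_L`. -/
lemma iterate_bootNEfree_shiftSite (k : ℕ) (x : SiteL L) (η : SiteL L → Bool) {z : SiteL ℓ}
    (h : FitsAt x z) (hz : bootNEfull^[k] (localView ℓ x η) z = false) :
    bootNEfree^[k] η (shiftSite x z h) = false := by
  induction k generalizing z with
  | zero => simpa [localView, h] using hz
  | succ k ih =>
    rw [iterate_succ_apply', bootNEfull_eq_false_iff] at hz
    rw [iterate_succ_apply', bootNEfree_eq_false_iff]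
    rcases hz with h₀ | ⟨⟨zN, hN, hzN⟩, ⟨zE, hE, hzE⟩⟩
    · exact .inl (ih h h₀)
    refine .inr ⟨fun y hy => ?_, fun y hy => ?_⟩
    · obtain ⟨hfit, rfl⟩ := exists_eq_shiftSite (x := x) (y := y) (z := zN)
        (by unfold isNorth at hy hN; simp only [shiftSite] at hy; omega)
        (by unfold isNorth at hy hN; simp only [shiftSite] at hy; omega)
      exact ih hfit hzN
    · obtain ⟨hfit, rfl⟩ := exists_eq_shiftSite (x := x) (y := y) (z := zE)
        (by unfold isEast at hy hE; simp only [shiftSite] at hy; omega)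
        (by unfold isEast at hy hE; simp only [shiftSite] at hy; omega)
      exact ih hfit hzE

end Lattice

section Constraint

variable {L : ℕ} {p : ℝ}

lemma cNE_nonneg (ℓ : ℕ) (x : SiteL L) (η : SiteL L → Bool) : 0 ≤ cNE ℓ x η := by
  unfold cNE; split_ifs <;> norm_num

lemma cNE_le_one (ℓ : ℕ) (x : SiteL L) (η : SiteL L → Bool) : cNE ℓ x η ≤ 1 := by
  unfold cNE; split_ifs <;> norm_num

lemma cNE_dependsOn (ℓ : ℕ) (x : SiteL L) :
    DependsOn (cNE ℓ x) ↑((univ.filter (InTriangle ℓ x)).erase x) := fun η η' h => by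
  unfold cNE
  rw [iterate_bootNEfree_congr ℓ (η' := update η' x true) fun y hy => ?_]
  by_cases hyx : y = x
  · simp [hyx]
  · simp [hyx, h y (by simp [hyx, hy])]

lemma mean_localView (x : SiteL L) (G : (SiteL ℓ → Bool) → ℝ) :
    mean p (fun η => G (localView ℓ x η))
      = mean p (fun ζ : SiteL ℓ → Bool => G fun z => if FitsAt x z then ζ z else false) := by
  have hj : Injective fun u : {z : SiteL ℓ // FitsAt x z} => shiftSite x u.1 u.2 :=
    fun u v huv => Subtype.ext (siteL_ext (by simpa [shiftSite] using congrArg (·.1.1.val) huv)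
      (by simpa [shiftSite] using congrArg (·.1.2.val) huv))
  exact (mean_comp_injective hj _).trans (mean_comp_injective Subtype.val_injective
    (fun κ => G fun z => if h : FitsAt x z then κ ⟨z, h⟩ else false)).symm

lemma ite_one_sub_cNE_le (x : SiteL L) (η : SiteL L → Bool) :
    (if η x = true then 1 - cNE ℓ x η else 0)
      ≤ if bootNEfull^[ℓ] (localView ℓ x η) (origin ℓ) = true then 1 else 0 := by
  have h01 : (0 : ℝ) ≤ if bootNEfull^[ℓ] (localView ℓ x η) (origin ℓ) = true then 1 else 0 := by
    split_ifs <;> norm_num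
  by_cases hηx : η x = true
  · have hupd : update η x true = η := by rw [← hηx]; exact update_eq_self x η
    rw [if_pos hηx, cNE, hupd]
    by_cases hfree : bootNEfree^[ℓ] η x = false
    · rwa [if_pos hfree, sub_self]
    · have hfull : bootNEfull^[ℓ] (localView ℓ x η) (origin ℓ) = true := by
        by_contra hc
        apply hfree
        simpa [shiftSite_origin] using
          iterate_bootNEfree_shiftSite ℓ x η (fitsAt_origin x) (by simpa using hc)
      simp [hfree, hfull]
  · rwa [if_neg hηx]

/-- On `{η_x = 1}`, an event of probability `p` independent of `c_x`, failure of the constraint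
means that `x` stays occupied, and then so does the origin in the local view. -/
lemma mean_one_sub_cNE_le (hp₀ : 0 < p) (hp₁ : p ≤ 1) (ℓ : ℕ) (x : SiteL L) :
    mean p (fun η => 1 - cNE ℓ x η) ≤ pNE ℓ p / p := by
  have hcx : DependsOn (fun η => 1 - cNE ℓ x η) {x}ᶜ := fun η η' h =>
    congrArg (1 - ·) ((cNE_dependsOn ℓ x).mono (fun y hy => ne_of_mem_erase hy) h)
  rw [le_div_iff₀ hp₀, mul_comm, ← mean_ite_eq_mul_mean hcx]
  refine (mean_mono hp₀.le hp₁ (ite_one_sub_cNE_le x)).trans ?_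
  rw [mean_localView x fun ζ => if bootNEfull^[ℓ] ζ (origin ℓ) = true then 1 else 0]
  refine mean_mono hp₀.le hp₁ fun ζ => ?_
  have hpad : (fun z => if FitsAt x z then ζ z else false) ≤ ζ := fun z => by
    dsimp only; split_ifs <;> simp
  have hmono := monotone_bootNEfull.iterate ℓ hpad (origin ℓ)
  split_ifs with h₁ h₂
  · exact le_rfl
  · rw [h₁] at hmono
    exact absurd (top_le_iff.1 hmono) h₂
  · exact zero_le_one
  · exact le_rfl

lemma card_filter_inTriangle_le (ℓ : ℕ) (y : SiteL L) :
    (univ.filter fun x => InTriangle ℓ x y).card ≤ (ℓ + 1) ^ 2 := by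
  calc (univ.filter fun x => InTriangle ℓ x y).card
      ≤ (range (ℓ + 1) ×ˢ range (ℓ + 1)).card := by
        refine card_le_card_of_injOn (fun x => (y.1.1.val - x.1.1.val, y.1.2.val - x.1.2.val))
          (fun x hx => ?_) (fun a ha b hb hab => ?_)
        · obtain ⟨h₁, h₂, h₃⟩ := (mem_filter.1 hx).2
          simp only [mem_coe, mem_product, mem_range]
          omega
        · obtain ⟨ha₁, ha₂, ha₃⟩ := (mem_filter.1 ha).2
          obtain ⟨hb₁, hb₂, hb₃⟩ := (mem_filter.1 hb).2
          simp only [Prod.mk.injEq] at hab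
          exact siteL_ext (by omega) (by omega)
    _ = (ℓ + 1) ^ 2 := by simp [sq]

lemma sum_mean_one_sub_cNE_le (hp₀ : 0 < p) (hp₁ : p ≤ 1) (ℓ : ℕ) (y : SiteL L) :
    ∑ x ∈ univ.filter (fun x => InTriangle ℓ x y), mean p (fun η => 1 - cNE ℓ x η)
      ≤ ((ℓ : ℝ) + 1) ^ 2 * (pNE ℓ p / p) := by
  have hpos : 0 ≤ pNE ℓ p / p := (mean_nonneg hp₀.le hp₁ fun η => sub_nonneg.2
    (cNE_le_one ℓ y η)).trans (mean_one_sub_cNE_le hp₀ hp₁ ℓ y)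
  calc _ ≤ (univ.filter fun x => InTriangle ℓ x y).card • (pNE ℓ p / p) :=
        sum_le_card_nsmul _ _ _ fun x _ => mean_one_sub_cNE_le hp₀ hp₁ ℓ x
    _ ≤ ((ℓ : ℝ) + 1) ^ 2 * (pNE ℓ p / p) := by
        rw [nsmul_eq_mul]
        gcongr
        exact_mod_cast card_filter_inTriangle_le ℓ y

def siteKey (x : SiteL L) : ℕ ×ₗ ℕ := toLex (x.1.1.val + x.1.2.val, x.1.1.val)

lemma siteKey_injective : Injective (siteKey (L := L)) := fun x y h => by
  simp only [siteKey, toLex_inj, Prod.mk.injEq] at h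
  exact siteL_ext (by omega) (by omega)

lemma siteKey_lt_of_inTriangle {ℓ : ℕ} {x y : SiteL L} (h : InTriangle ℓ x y) (hne : y ≠ x) :
    siteKey x < siteKey y := by
  refine Prod.Lex.toLex_lt_toLex.2 (.inl ?_)
  by_contra hle
  exact hne (siteL_ext (by unfold InTriangle at h; omega) (by unfold InTriangle at h; omega))

end Constraint

theorem NE_longrange_poincare_general (ℓ : ℕ) (p : ℝ) (hp : p ∈ Set.Ioo (0 : ℝ) 1)
    (hδ : ((ℓ : ℝ) + 1) ^ 2 * (pNE ℓ p / p) ≤ 1 / 4) :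
    ∀ (L : ℕ) (f : (SiteL L → Bool) → ℝ),
      varTot p f ≤ 8 * ∑ x : SiteL L, mean p (fun η => cNE ℓ x η * cvar p {x} f η) := by
  intro L f
  let _ : LinearOrder (SiteL L) := LinearOrder.lift' siteKey siteKey_injective
  have hsum : ∀ y : SiteL L, ∑ x ∈ univ.filter
      (fun x => y ∈ insert x ((univ.filter (InTriangle ℓ x)).erase x)),
        mean p (fun η => 1 - cNE ℓ x η) ≤ 1 / 4 := fun y => by
    simp only [insert_erase (mem_filter.2 ⟨mem_univ _, inTriangle_self ℓ _⟩), mem_filter,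
      mem_univ, true_and]
    exact (sum_mean_one_sub_cNE_le hp.1 hp.2.le ℓ y).trans hδ
  have hpoincare := one_sub_two_mul_varTot_le hp.1.le hp.2.le (cNE ℓ) _ (cNE_nonneg ℓ)
    (cNE_le_one ℓ) (cNE_dependsOn ℓ)
    (fun x y hy => siteKey_lt_of_inTriangle (mem_filter.1 (mem_of_mem_erase hy)).2
      (ne_of_mem_erase hy)) hsum f
  have hnonneg : 0 ≤ ∑ x : SiteL L, mean p (fun η => cNE ℓ x η * cvar p {x} f η) :=
    sum_nonneg fun x _ => mean_nonneg hp.1.le hp.2.le fun η =>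
      mul_nonneg (cNE_nonneg ℓ x η) (cvar_singleton_nonneg hp.1.le hp.2.le x f η)
  linarith

theorem NE_longrange_poincare (ℓ : ℕ) (p : ℝ) (hp : p ∈ Set.Ioo (0 : ℝ) 1) (hl : 1 ≤ ℓ)
    (hδ : ((ℓ : ℝ) + 1) ^ 2 * (pNE ℓ p / p) ≤ 1 / 4) :
    ∀ (L : ℕ) (f : (SiteL L → Bool) → ℝ),
      varTot p f ≤ 8 * ∑ x : SiteL L, mean p (fun η => cNE ℓ x η * cvar p {x} f η) :=
  NE_longrange_poincare_general ℓ p hp hδ
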